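/- arXiv:2305.02872 — 4 statements merged into one kernel-verified Lean document; each statement's English description precedes it below -/
import Mathlib

section
/- If φ : X_p → X_q is a finitary isomorphism with finite expectation, then m_φ(x) < ∞ for μ_p-a.e. x ∈ X_p; that is, for a.e. x there exists M ∈ ℕ such that r_φ(g⁻¹·x) ≤ |g| + M for every g ∈ W_a. -/
open MeasureTheory ProbabilityTheory Filter

namespace Finitary

/-- The free group `F_ℓ` on `ℓ` generators. -/
abbrev FG (ℓ : ℕ) := FreeGroup (Fin ℓ)

instance {ℓ : ℕ} : Countable (FG ℓ) := FreeGroup.toWord_injective.countable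

/-- The word length on the free group. -/
noncomputable def wl {ℓ : ℕ} (g : FG ℓ) : ℕ := FreeGroup.norm g

/-- The ball `B(r)` of radius `r` centered at the identity. -/
def ball (ℓ r : ℕ) : Set (FG ℓ) := {g | wl g ≤ r}

/-- `W_a`: the set of reduced words ending in the generator `a`, together with the identity. -/
def Wa {ℓ : ℕ} (a : Fin ℓ) : Set (FG ℓ) :=
  {g | g = 1 ∨ wl g = wl (g * (FreeGroup.of a)⁻¹) + 1}

/-- The configuration space `X_p = {1,…,m}^{F_ℓ}`. -/
abbrev Conf (ℓ m : ℕ) := FG ℓ → Fin m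

/-- The shift action `(g·x)_h = x_{g⁻¹h}`. -/
def shift {ℓ m : ℕ} (g : FG ℓ) (x : Conf ℓ m) : Conf ℓ m := fun h => x (g⁻¹ * h)

/-- `μ` is the Bernoulli product measure on `X_p` with marginal weights `P`:
every cylinder set has measure equal to the product of the weights of its fixed symbols. -/
def IsBernoulli {ℓ m : ℕ} (P : Fin m → ℝ) (μ : Measure (Conf ℓ m)) : Prop :=
  IsProbabilityMeasure μ ∧
    ∀ (A : Finset (FG ℓ)) (σ : FG ℓ → Fin m),
      (μ {x | ∀ g ∈ A, x g = σ g}).toReal = ∏ g ∈ A, P (σ g)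

/-- The set of radii `r` such that the ball `B(r)` determines `φ(x)_e`. -/
def codeSet {ℓ m n : ℕ} (φ : Conf ℓ m → Conf ℓ n) (x : Conf ℓ m) : Set ℕ :=
  {r | ∀ x' : Conf ℓ m, (∀ g ∈ ball ℓ r, x' g = x g) → φ x' 1 = φ x 1}

/-- `r_φ(x)`: the least radius of a ball determining `φ(x)_e`. -/
noncomputable def rphi {ℓ m n : ℕ} (φ : Conf ℓ m → Conf ℓ n) (x : Conf ℓ m) : ℕ :=
  sInf (codeSet φ x)

/-- `v_φ(x) = |B(r_φ(x))|`. -/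
noncomputable def vphi {ℓ m n : ℕ} (φ : Conf ℓ m → Conf ℓ n) (x : Conf ℓ m) : ℕ :=
  (ball ℓ (rphi φ x)).ncard

/-- A finitary coding: a measurable, equivariant, measure-preserving map which is
a.e. finitarily determined at the identity coordinate (i.e. continuous off a null set). -/
structure IsFinitaryCoding {ℓ m n : ℕ} (μp : Measure (Conf ℓ m)) (μq : Measure (Conf ℓ n))
    (φ : Conf ℓ m → Conf ℓ n) : Prop where
  measurable : Measurable φ
  measurePreserving : MeasurePreserving φ μp μq
  equivariant : ∀ g : FG ℓ, ∀ᵐ x ∂μp, φ (shift g x) = shift g (φ x)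
  finitary : ∀ᵐ x ∂μp, (codeSet φ x).Nonempty

/-- A finitary isomorphism: a pair of mutually inverse (mod null sets) finitary codings. -/
structure IsFinitaryIso {ℓ m n : ℕ} (μp : Measure (Conf ℓ m)) (μq : Measure (Conf ℓ n))
    (φ : Conf ℓ m → Conf ℓ n) (ψ : Conf ℓ n → Conf ℓ m) : Prop where
  toCoding : IsFinitaryCoding μp μq φ
  invCoding : IsFinitaryCoding μq μp ψ
  leftInv : ∀ᵐ x ∂μp, ψ (φ x) = x
  rightInv : ∀ᵐ y ∂μq, φ (ψ y) = y

/-- Finite expectation of code volume: `∫ v_φ dμ_p < ∞` and `∫ v_{φ⁻¹} dμ_q < ∞`. -/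
def FiniteExpectation {ℓ m n : ℕ} (μp : Measure (Conf ℓ m)) (μq : Measure (Conf ℓ n))
    (φ : Conf ℓ m → Conf ℓ n) (ψ : Conf ℓ n → Conf ℓ m) : Prop :=
  (∫⁻ x, (vphi φ x : ENNReal) ∂μp) < ⊤ ∧ (∫⁻ y, (vphi ψ y : ENNReal) ∂μq) < ⊤

/-- The sub-σ-algebra generated by the coordinate maps `x ↦ x_g`, `g ∈ S`. -/
def coordAlg {ℓ m : ℕ} (S : Set (FG ℓ)) : MeasurableSpace (Conf ℓ m) :=
  MeasurableSpace.comap (fun x => S.restrict x) inferInstance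

/-- The past algebra `𝒜_{p,a}`, generated by the coordinates in `W_a`. -/
def pastAlg {ℓ m : ℕ} (a : Fin ℓ) : MeasurableSpace (Conf ℓ m) := coordAlg (Wa a)

/-- The atom of `x` for the σ-algebra generated by the coordinates in `S`. -/
def atomOn {ℓ m : ℕ} (S : Set (FG ℓ)) (x : Conf ℓ m) : Set (Conf ℓ m) :=
  {y | ∀ g ∈ S, y g = x g}

/-- The regular conditional probability `μ^𝒞(s | x)` given the sub-σ-algebra `𝒞`. -/
noncomputable def condProb {ℓ m : ℕ} (μ : Measure (Conf ℓ m)) [IsFiniteMeasure μ]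
    (𝒞 : MeasurableSpace (Conf ℓ m)) (s : Set (Conf ℓ m)) (x : Conf ℓ m) : ENNReal :=
  @condExpKernel (Conf ℓ m) MeasurableSpace.pi inferInstance μ inferInstance 𝒞 x s

/-- Conditional information `I_μ(ℬ|𝒞)(x) = −log μ^𝒞([x]_ℬ | x)`, where the atom `[x]_ℬ`
of the sub-σ-algebra `ℬ` is supplied explicitly. -/
noncomputable def condInfo {ℓ m : ℕ} (μ : Measure (Conf ℓ m)) [IsFiniteMeasure μ]
    (𝒞 : MeasurableSpace (Conf ℓ m)) (atomB : Set (Conf ℓ m)) (x : Conf ℓ m) : ℝ :=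
  - Real.log ((condProb μ 𝒞 atomB x).toReal)

/-- The information cocycle `J(𝒜_{p,a}, V) = I(𝒜_{p,a}|V⁻¹𝒜_{p,a}) − I(V⁻¹𝒜_{p,a}|𝒜_{p,a})`
for a measure-preserving `V` (the Radon–Nikodym term of the general definition vanishes). -/
noncomputable def Jcoc {ℓ m : ℕ} (a : Fin ℓ) (μ : Measure (Conf ℓ m)) [IsFiniteMeasure μ]
    (V : Conf ℓ m → Conf ℓ m) (x : Conf ℓ m) : ℝ :=
  condInfo μ (MeasurableSpace.comap V (pastAlg a)) (atomOn (Wa a) x) x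
    - condInfo μ (pastAlg a) (V ⁻¹' atomOn (Wa a) (V x)) x

/-- The shift by `g` as a bijection of the configuration space. -/
def shiftEquiv {ℓ m : ℕ} (g : FG ℓ) : Equiv.Perm (Conf ℓ m) where
  toFun := shift g
  invFun := shift g⁻¹
  left_inv x := by funext h; simp [shift, mul_assoc]
  right_inv x := by funext h; simp [shift, mul_assoc]

/-- A locally finite measure-preserving measurable bijection of `(X_p, μ)`. -/
def IsLocallyFiniteMP {ℓ m : ℕ} (μ : Measure (Conf ℓ m)) (V : Equiv.Perm (Conf ℓ m)) : Prop :=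
  Measurable ⇑V ∧ Measurable ⇑V.symm ∧ MeasurePreserving ⇑V μ μ ∧
    ∀ᵐ x ∂μ, {g : FG ℓ | V x g ≠ x g}.Finite

/-- The group `G_p` generated by the shifts together with the locally finite
measure-preserving bijections. -/
def Gp {ℓ m : ℕ} (μ : Measure (Conf ℓ m)) : Subgroup (Equiv.Perm (Conf ℓ m)) :=
  Subgroup.closure ({V | ∃ g : FG ℓ, V = shiftEquiv g} ∪ {V | IsLocallyFiniteMP μ V})

/-- The cylinder set where the coordinates on `S` are fixed to the values of `η`. -/
def cylOn {ℓ m : ℕ} (S : Set (FG ℓ)) (η : FG ℓ → Fin m) : Set (Conf ℓ m) :=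
  {x | ∀ g ∈ S, x g = η g}

/-- `H_C^+`: locally finite m.p. bijections fixing all coordinates in `B(N) ∪ (F_ℓ ∖ W_a)`. -/
def HCplus {ℓ m : ℕ} (μ : Measure (Conf ℓ m)) (a : Fin ℓ) (N : ℕ) :
    Set (Equiv.Perm (Conf ℓ m)) :=
  {h | IsLocallyFiniteMP μ h ∧ ∀ᵐ x ∂μ, ∀ g ∈ ball ℓ N ∪ (Wa a)ᶜ, h x g = x g}

/-- `H_C^-`: locally finite m.p. bijections fixing all coordinates in `W_a ∪ B(N)`. -/
def HCminus {ℓ m : ℕ} (μ : Measure (Conf ℓ m)) (a : Fin ℓ) (N : ℕ) :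
    Set (Equiv.Perm (Conf ℓ m)) :=
  {h | IsLocallyFiniteMP μ h ∧ ∀ᵐ x ∂μ, ∀ g ∈ Wa a ∪ ball ℓ N, h x g = x g}

/-- The normalized measure `μ_C(A) = μ(A)/μ(C)` (real-valued). -/
noncomputable def relMeas {ℓ m : ℕ} (μ : Measure (Conf ℓ m)) (C A : Set (Conf ℓ m)) : ℝ :=
  (μ A).toReal / (μ C).toReal

/-- The set where `m_φ(x) ≤ M`. -/
def mphiLe {ℓ m n : ℕ} (φ : Conf ℓ m → Conf ℓ n) (a : Fin ℓ) (M : ℕ) : Set (Conf ℓ m) :=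
  {x | ∀ g ∈ Wa a, rphi φ (shift g⁻¹ x) ≤ wl g + M}

/-- The set where `a_φ(x) ≤ M`. -/
def aphiLe {ℓ m n : ℕ} (φ : Conf ℓ m → Conf ℓ n) (a : Fin ℓ) (M : ℕ) : Set (Conf ℓ m) :=
  {x | ∀ g ∉ Wa a, rphi φ (shift g⁻¹ x) ≤ wl g + M}

/-- The set `D = C ∩ {x : m_φ(x) ≤ M, a_φ(x) ≤ M}` for the cylinder `C` over `B(M)`
determined by `η`. -/
def Dset {ℓ m n : ℕ} (φ : Conf ℓ m → Conf ℓ n) (a : Fin ℓ) (M : ℕ) (η : FG ℓ → Fin m) :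
    Set (Conf ℓ m) :=
  cylOn (ball ℓ M) η ∩ (mphiLe φ a M ∩ aphiLe φ a M)

/-- The coboundary equation `J(𝒜_{p,a}, V) = J(𝒜_{q,a}, φVφ⁻¹)∘φ + f∘V − f` a.e.,
for every `V ∈ G_p`. -/
def CocycleEq {ℓ m n : ℕ} (a : Fin ℓ) (μp : Measure (Conf ℓ m)) (μq : Measure (Conf ℓ n))
    [IsFiniteMeasure μp] [IsFiniteMeasure μq] (φ : Conf ℓ m → Conf ℓ n)
    (ψ : Conf ℓ n → Conf ℓ m) (f : Conf ℓ m → ℝ) : Prop :=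
  ∀ V ∈ Gp μp, ∀ᵐ x ∂μp,
    Jcoc a μp (⇑V) x = Jcoc a μq (φ ∘ ⇑V ∘ ψ) (φ x) + f (V x) - f x

/-- Tail property: every point obtained from a point of `D ∖ E` by altering coordinates only
at `a^k` for `−M−n < k < −M` (or only at `a^k` for `M < k < M+n`) lies in `A`. -/
def TailProp {ℓ m : ℕ} (a : Fin ℓ) (M : ℕ) (D E A : Set (Conf ℓ m)) : Prop :=
  ∀ x ∈ D \ E, ∀ n : ℕ, ∀ x' : Conf ℓ m,
    ((∀ g : FG ℓ,
        (¬ ∃ k : ℤ, -(M : ℤ) - (n : ℤ) < k ∧ k < -(M : ℤ) ∧ g = (FreeGroup.of a) ^ k) →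
        x' g = x g) ∨
     (∀ g : FG ℓ,
        (¬ ∃ k : ℤ, (M : ℤ) < k ∧ k < (M : ℤ) + (n : ℤ) ∧ g = (FreeGroup.of a) ^ k) →
        x' g = x g)) →
    x' ∈ A

/-!
Borel–Cantelli. Counting the ball `B(r_φ(x))` point by point gives
`∫ v_φ dμ = ∑_g μ(r_φ ≥ |g|)`, and shift invariance of the Bernoulli measure gives
`μ(r_φ(g⁻¹·x) ≥ |g|) = μ(r_φ ≥ |g|)`. Finite expectation thus makes `∑_g μ(r_φ(g⁻¹·x) ≥ |g|)`
finite, so for a.e. `x` only finitely many `g` have `r_φ(g⁻¹·x) ≥ |g|`, and the largest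
`r_φ(g⁻¹·x)` among them serves as `M`.
-/

open scoped ENNReal

variable {ℓ m n : ℕ}

lemma finite_ball (ℓ r : ℕ) : (ball ℓ r).Finite :=
  ((List.finite_length_le (Fin ℓ × Bool) r).preimage FreeGroup.toWord_injective.injOn).subset
    fun _ hg => hg

def pointCylinders (ℓ m : ℕ) : Set (Set (Conf ℓ m)) :=
  {S | ∃ (A : Finset (FG ℓ)) (σ : FG ℓ → Fin m), S = {x | ∀ g ∈ A, x g = σ g}}

lemma measurableSet_pointCylinder (A : Finset (FG ℓ)) (σ : FG ℓ → Fin m) :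
    MeasurableSet {x : Conf ℓ m | ∀ g ∈ A, x g = σ g} := by
  simp only [Set.ofPred_forall]
  exact .biInter A.countable_toSet fun g _ => measurableSet_eq_fun (measurable_pi_apply g)
    measurable_const

lemma isPiSystem_pointCylinders : IsPiSystem (pointCylinders ℓ m) := by
  rintro _ ⟨A, σ, rfl⟩ _ ⟨B, τ, rfl⟩ ⟨x₀, hA, hB⟩
  refine ⟨A ∪ B, x₀, Set.ext fun y => ⟨fun ⟨hyA, hyB⟩ g hg => ?_, fun hy => ?_⟩⟩
  · rcases Finset.mem_union.mp hg with hg | hg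
    · exact (hyA g hg).trans (hA g hg).symm
    · exact (hyB g hg).trans (hB g hg).symm
  · exact ⟨fun g hg => (hy g (Finset.mem_union_left B hg)).trans (hA g hg),
      fun g hg => (hy g (Finset.mem_union_right A hg)).trans (hB g hg)⟩

lemma generateFrom_pointCylinders :
    MeasurableSpace.generateFrom (pointCylinders ℓ m) = MeasurableSpace.pi := by
  refine le_antisymm (MeasurableSpace.generateFrom_le ?_) (iSup_le fun g => ?_)
  · rintro _ ⟨A, σ, rfl⟩
    exact measurableSet_pointCylinder A σ
  · refine Measurable.comap_le
      (@measurable_to_countable' _ _ _ _ (.generateFrom (pointCylinders ℓ m)) _ fun c => ?_)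
    refine MeasurableSpace.measurableSet_generateFrom ⟨{g}, fun _ => c, ?_⟩
    ext x
    simp

lemma IsBernoulli.unique {P : Fin m → ℝ} {μ ν : Measure (Conf ℓ m)} (hμ : IsBernoulli P μ)
    (hν : IsBernoulli P ν) : μ = ν := by
  have := hμ.1
  have := hν.1
  refine ext_of_generate_finite _ generateFrom_pointCylinders.symm isPiSystem_pointCylinders
    ?_ (by simp)
  rintro _ ⟨A, σ, rfl⟩
  exact (ENNReal.toReal_eq_toReal_iff' (measure_ne_top _ _) (measure_ne_top _ _)).mp
    ((hμ.2 A σ).trans (hν.2 A σ).symm)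

lemma measurable_shift (g : FG ℓ) : Measurable (shift g : Conf ℓ m → Conf ℓ m) :=
  measurable_pi_lambda _ fun _ => measurable_pi_apply _

lemma shift_preimage_pointCylinder (g : FG ℓ) (A : Finset (FG ℓ)) (σ : FG ℓ → Fin m) :
    shift g ⁻¹' {x | ∀ h ∈ A, x h = σ h} =
      {x | ∀ h ∈ A.image (g⁻¹ * ·), x h = σ (g * h)} := by
  ext x
  simp only [Set.mem_preimage, Set.mem_ofPred_eq, Finset.forall_mem_image, shift,
    mul_inv_cancel_left]

lemma IsBernoulli.map_shift {P : Fin m → ℝ} {μ : Measure (Conf ℓ m)} (hμ : IsBernoulli P μ)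
    (g : FG ℓ) : IsBernoulli P (μ.map (shift g)) := by
  have := hμ.1
  refine ⟨Measure.isProbabilityMeasure_map (measurable_shift g).aemeasurable, fun A σ => ?_⟩
  rw [Measure.map_apply (measurable_shift g) (measurableSet_pointCylinder A σ),
    shift_preimage_pointCylinder, hμ.2,
    Finset.prod_image fun _ _ _ _ h => mul_left_cancel h]
  simp

lemma IsBernoulli.measurePreserving_shift {P : Fin m → ℝ} {μ : Measure (Conf ℓ m)}
    (hμ : IsBernoulli P μ) (g : FG ℓ) : MeasurePreserving (shift g) μ μ :=
  ⟨measurable_shift g, (hμ.map_shift g).unique hμ⟩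

section CodingRadius

variable (φ : Conf ℓ m → Conf ℓ n)

lemma mem_codeSet_of_le {x : Conf ℓ m} {r r' : ℕ} (hr : r ∈ codeSet φ x) (hrr' : r ≤ r') :
    r' ∈ codeSet φ x :=
  fun x' hx' => hr x' fun g hg => hx' g (le_trans hg hrr')

lemma mem_codeSet_of_eqOn_ball {x y : Conf ℓ m} {r : ℕ} (hxy : ∀ g ∈ ball ℓ r, x g = y g)
    (hx : r ∈ codeSet φ x) : r ∈ codeSet φ y := by
  intro x' hx'
  rw [hx x' fun g hg => (hx' g hg).trans (hxy g hg).symm, hx y fun g hg => (hxy g hg).symm]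

lemma measurableSet_setOf_mem_codeSet (r : ℕ) :
    MeasurableSet {x : Conf ℓ m | r ∈ codeSet φ x} := by
  have := (finite_ball ℓ r).to_subtype
  have hsat : {x : Conf ℓ m | r ∈ codeSet φ x} =
      (ball ℓ r).domRestrict ⁻¹' ((ball ℓ r).domRestrict '' {x | r ∈ codeSet φ x}) := by
    refine (Set.subset_preimage_image _ _).antisymm ?_
    rintro y ⟨x, hx, hxy⟩
    exact mem_codeSet_of_eqOn_ball φ (fun g hg => congrFun hxy ⟨g, hg⟩) hx
  rw [hsat]
  exact Set.measurable_restrict _ (Set.toFinite _).measurableSet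

lemma rphi_le_iff {x : Conf ℓ m} {k : ℕ} :
    rphi φ x ≤ k ↔ k ∈ codeSet φ x ∨ codeSet φ x = ∅ := by
  refine ⟨fun h => ?_, ?_⟩
  · rcases (codeSet φ x).eq_empty_or_nonempty with hempty | hne
    · exact .inr hempty
    · exact .inl (mem_codeSet_of_le φ (Nat.sInf_mem hne) h)
  · rintro (hk | hempty)
    · exact Nat.sInf_le hk
    · simp [rphi, hempty]

lemma measurable_rphi : Measurable (rphi φ) := by
  refine measurable_of_Iic fun k => ?_
  have hIic : rphi φ ⁻¹' Set.Iic k =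
      {x | k ∈ codeSet φ x} ∪ ⋂ j, {x | j ∈ codeSet φ x}ᶜ := by
    ext x
    simp [rphi_le_iff, Set.eq_empty_iff_forall_notMem]
  rw [hIic]
  exact (measurableSet_setOf_mem_codeSet φ k).union
    (.iInter fun j => (measurableSet_setOf_mem_codeSet φ j).compl)

lemma vphi_eq_tsum (x : Conf ℓ m) :
    (vphi φ x : ℝ≥0∞) = ∑' g : FG ℓ, {y | wl g ≤ rphi φ y}.indicator 1 x := by
  rw [vphi, ← ENat.toENNReal_coe, (finite_ball ℓ _).cast_ncard_eq, ← ENNReal.tsum_set_one]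
  exact tsum_subtype (ball ℓ (rphi φ x)) 1

lemma lintegral_vphi (μ : Measure (Conf ℓ m)) :
    ∫⁻ x, (vphi φ x : ℝ≥0∞) ∂μ = ∑' g : FG ℓ, μ {x | wl g ≤ rphi φ x} := by
  have hmeas (g : FG ℓ) : MeasurableSet {x | wl g ≤ rphi φ x} :=
    measurableSet_le measurable_const (measurable_rphi φ)
  simp_rw [vphi_eq_tsum]
  rw [lintegral_tsum fun g => (measurable_one.indicator (hmeas g)).aemeasurable]
  exact tsum_congr fun g => lintegral_indicator_one (hmeas g)

end CodingRadius

lemma ae_exists_forall_le_add_of_tsum_ne_top {α ι : Type*} [Countable ι] [MeasurableSpace α]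
    {μ : Measure α} {f : ι → α → ℕ} {c : ι → ℕ}
    (h : ∑' i, μ {x | c i ≤ f i x} ≠ ∞) : ∀ᵐ x ∂μ, ∃ M, ∀ i, f i x ≤ c i + M := by
  filter_upwards [ae_finite_setOfPred_mem h] with x hx
  obtain ⟨M, hM⟩ := (hx.image fun i => f i x).bddAbove
  refine ⟨M, fun i => ?_⟩
  by_cases hi : c i ≤ f i x
  · exact (hM ⟨i, hi, rfl⟩).trans le_add_self
  · omega

lemma ae_exists_forall_rphi_shift_le {μ : Measure (Conf ℓ m)} {φ : Conf ℓ m → Conf ℓ n}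
    (hμ : ∀ g, MeasurePreserving (shift g) μ μ) (hv : ∫⁻ x, (vphi φ x : ℝ≥0∞) ∂μ ≠ ∞) :
    ∀ᵐ x ∂μ, ∃ M, ∀ g, rphi φ (shift g⁻¹ x) ≤ wl g + M := by
  refine ae_exists_forall_le_add_of_tsum_ne_top ?_
  have hinv (g : FG ℓ) : μ {x | wl g ≤ rphi φ (shift g⁻¹ x)} = μ {x | wl g ≤ rphi φ x} :=
    (hμ g⁻¹).measure_preimage
      (measurableSet_le measurable_const (measurable_rphi φ)).nullMeasurableSet
  simpa only [hinv, lintegral_vphi] using hv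

theorem mphi_finite_ae_general
    {ℓ m n : ℕ} (a : Fin ℓ) (P : Fin m → ℝ)
    (μp : Measure (Conf ℓ m)) (μq : Measure (Conf ℓ n))
    (hμp : IsBernoulli P μp)
    (φ : Conf ℓ m → Conf ℓ n) (ψ : Conf ℓ n → Conf ℓ m)
    (hexp : FiniteExpectation μp μq φ ψ) :
    ∀ᵐ x ∂μp, ∃ M : ℕ, ∀ g ∈ Wa a, rphi φ (shift g⁻¹ x) ≤ wl g + M := by
  filter_upwards [ae_exists_forall_rphi_shift_le hμp.measurePreserving_shift hexp.1.ne]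
    with x ⟨M, hM⟩
  exact ⟨M, fun g _ => hM g⟩

theorem mphi_finite_ae
    {ℓ m n : ℕ} (hℓ : 1 ≤ ℓ) (a : Fin ℓ) (P : Fin m → ℝ) (Q : Fin n → ℝ)
    (hP : ∀ i, 0 < P i) (hQ : ∀ j, 0 < Q j)
    (hPsum : ∑ i, P i = 1) (hQsum : ∑ j, Q j = 1)
    (μp : Measure (Conf ℓ m)) (μq : Measure (Conf ℓ n))
    (hμp : IsBernoulli P μp) (hμq : IsBernoulli Q μq)
    (φ : Conf ℓ m → Conf ℓ n) (ψ : Conf ℓ n → Conf ℓ m)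
    (hiso : IsFinitaryIso μp μq φ ψ) (hexp : FiniteExpectation μp μq φ ψ) :
    ∀ᵐ x ∂μp, ∃ M : ℕ, ∀ g ∈ Wa a, rphi φ (shift g⁻¹ x) ≤ wl g + M :=
  mphi_finite_ae_general a P μp μq hμp φ ψ hexp

end Finitary
end

section
/- For every integer n ≥ 1, let ℬ_n be the sub-σ-algebra of X_p generated by the coordinate maps x ↦ x_g for g ∈ W_a ∖ {a^0, a^1, …, a^{n−1}} (the image of the past algebra 𝒜_{p,a} under the shift by a^n), whose atom at x is [x]_{ℬ_n} = {y ∈ X_p : y_g = x_g for all g ∈ W_a ∖ {a^0, …, a^{n−1}}}. Then for μ_p-a.e. x ∈ X_p: I_{μ_p}(𝒜_{p,a} | ℬ_n)(x) = Σ_{i=0}^{n−1} (−log P_{x_{a^i}}) and I_{μ_p}(ℬ_n | 𝒜_{p,a})(x) = 0; consequently the information cocycle satisfies J(𝒜_{p,a}, a^n)(x) = Σ_{i=0}^{n−1} (−log P_{x_{a^i}}). -/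
open MeasureTheory ProbabilityTheory Filter

namespace ProbabilityTheory

variable {Ω : Type*} {m m' mΩ : MeasurableSpace Ω} [StandardBorelSpace Ω] {μ : Measure Ω}
  [IsFiniteMeasure μ] {s : Set Ω}

lemma condExpKernel_ae_eq_indicator (hm : m ≤ mΩ) (hs : MeasurableSet[m] s) :
    ∀ᵐ ω ∂μ, condExpKernel μ m ω s = s.indicator 1 ω := by
  have hind : μ⟦s | m⟧ = s.indicator (fun _ => (1 : ℝ)) :=
    condExp_of_stronglyMeasurable hm (stronglyMeasurable_const.indicator hs)
      ((integrable_const 1).indicator (hm s hs))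
  filter_upwards [condExpKernel_ae_eq_condExp hm (hm s hs)] with ω hω
  rw [hind, measureReal_def] at hω
  by_cases hωs : ω ∈ s <;> simp_all [ENNReal.toReal_eq_one_iff, ENNReal.toReal_eq_zero_iff]

lemma condExpKernel_ae_eq_of_indep (hm : m ≤ mΩ) (hm' : m' ≤ mΩ)
    (hindep : Indep m' m μ) (hs : MeasurableSet[m'] s) :
    ∀ᵐ ω ∂μ, condExpKernel μ m ω s = μ s := by
  have hconst : μ⟦s | m⟧ =ᵐ[μ] fun _ => μ.real s := by
    refine (condExp_indep_eq hm' hm (stronglyMeasurable_const.indicator hs) hindep).trans ?_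
    simp [integral_indicator (hm' s hs)]
  filter_upwards [(condExpKernel_ae_eq_condExp hm (hm' s hs)).trans hconst] with ω hω
  exact (ENNReal.toReal_eq_toReal_iff' (measure_ne_top _ _) (measure_ne_top _ _)).mp hω

end ProbabilityTheory

namespace Finitary

section Coordinates

variable {ℓ m : ℕ}

lemma coordAlg_le (S : Set (FG ℓ)) :
    (coordAlg S : MeasurableSpace (Conf ℓ m)) ≤ MeasurableSpace.pi :=
  (Set.measurable_restrict S).comap_le

lemma coordAlg_eq_iSup (S : Set (FG ℓ)) :
    (coordAlg S : MeasurableSpace (Conf ℓ m)) =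
      ⨆ g ∈ S, MeasurableSpace.comap (fun x : Conf ℓ m => x g) inferInstance := by
  rw [coordAlg, MeasurableSpace.pi, MeasurableSpace.comap_iSup, iSup_subtype']
  simp only [MeasurableSpace.comap_comp]
  rfl

lemma measurableSet_coordAlg_coord_eq {S : Set (FG ℓ)} {g : FG ℓ} (hg : g ∈ S) (c : Fin m) :
    MeasurableSet[coordAlg S] {x : Conf ℓ m | x g = c} :=
  ⟨_, measurable_pi_apply (⟨g, hg⟩ : S) (measurableSet_singleton c), rfl⟩

lemma atomOn_eq_preimage (S : Set (FG ℓ)) (x : Conf ℓ m) :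
    atomOn S x = S.domRestrict ⁻¹' ({S.domRestrict x} : Set (S → Fin m)) := by
  ext y
  simp [atomOn, funext_iff, Set.domRestrict]

lemma measurableSet_coordAlg_atomOn (S : Set (FG ℓ)) (x : Conf ℓ m) :
    MeasurableSet[coordAlg S] (atomOn S x) :=
  atomOn_eq_preimage S x ▸ ⟨_, measurableSet_singleton _, rfl⟩

lemma atomOn_union (S T : Set (FG ℓ)) (x : Conf ℓ m) :
    atomOn (S ∪ T) x = atomOn S x ∩ atomOn T x := by
  ext y
  simp [atomOn, or_imp, forall_and]

end Coordinates

section Bernoulli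

variable {ℓ m : ℕ} {P : Fin m → ℝ} {μ : Measure (Conf ℓ m)}

namespace IsBernoulli

lemma toReal_measure_atomOn (hμ : IsBernoulli P μ) (F : Finset (FG ℓ)) (x : Conf ℓ m) :
    (μ (atomOn (↑F) x)).toReal = ∏ g ∈ F, P (x g) :=
  hμ.2 F x

lemma toReal_measure_pi_mem (hμ : IsBernoulli P μ) (F : Finset (FG ℓ))
    (t : FG ℓ → Finset (Fin m)) :
    (μ {x | ∀ g ∈ F, x g ∈ t g}).toReal = ∏ g ∈ F, ∑ c ∈ t g, P c := by
  classical
  have := hμ.1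
  obtain ⟨x₀⟩ := nonempty_of_isProbabilityMeasure μ
  let extend (τ : ∀ g ∈ F, Fin m) : Conf ℓ m := fun g => if h : g ∈ F then τ g h else x₀ g
  have hunion : {x | ∀ g ∈ F, x g ∈ t g} = ⋃ τ ∈ F.pi t, atomOn (↑F) (extend τ) := by
    ext x
    simp only [Set.mem_ofPred_eq, Set.mem_iUnion, Finset.mem_pi, atomOn, Finset.mem_coe]
    refine ⟨fun hx => ⟨fun g _ => x g, hx, fun g hg => by simp [extend, hg]⟩, ?_⟩
    rintro ⟨τ, hτ, hx⟩ g hg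
    simpa [hx g hg, extend, hg] using hτ g hg
  have hdisj : (↑(F.pi t) : Set (∀ g ∈ F, Fin m)).PairwiseDisjoint
      fun τ => atomOn (↑F) (extend τ) := by
    refine fun τ₁ _ τ₂ _ hne => Set.disjoint_left.2 fun x hx₁ hx₂ => hne ?_
    funext g hg
    simpa [extend, hg] using (hx₁ g hg).symm.trans (hx₂ g hg)
  rw [hunion, measure_biUnion_finset hdisj
      fun τ _ => coordAlg_le _ _ (measurableSet_coordAlg_atomOn _ _),
    ENNReal.toReal_sum fun _ _ => measure_ne_top _ _, Finset.prod_sum]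
  refine Finset.sum_congr rfl fun τ _ => ?_
  rw [hμ.toReal_measure_atomOn, ← Finset.prod_attach F]
  simp [extend]

lemma iIndepFun_coord (hμ : IsBernoulli P μ) : iIndepFun (fun g (x : Conf ℓ m) => x g) μ := by
  classical
  have := hμ.1
  rw [iIndepFun_iff_measure_inter_preimage_eq_mul]
  intro F t _
  have hbox (G : Finset (FG ℓ)) : (μ (⋂ g ∈ G, (fun x : Conf ℓ m => x g) ⁻¹' t g)).toReal =
      ∏ g ∈ G, ∑ c ∈ (t g).toFinset, P c := by
    have hset : ⋂ g ∈ G, (fun x : Conf ℓ m => x g) ⁻¹' t g =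
        {x | ∀ g ∈ G, x g ∈ (t g).toFinset} := by
      ext; simp
    rw [hset, hμ.toReal_measure_pi_mem]
  refine (ENNReal.toReal_eq_toReal_iff' (measure_ne_top _ _)
    (ENNReal.prod_ne_top fun _ _ => measure_ne_top _ _)).1 ?_
  rw [hbox, ENNReal.toReal_prod]
  refine Finset.prod_congr rfl fun g _ => ?_
  simpa using (hbox {g}).symm

lemma indep_coordAlg (hμ : IsBernoulli P μ) {S T : Set (FG ℓ)} (hST : Disjoint S T) :
    Indep (coordAlg S) (coordAlg T) μ := by
  rw [coordAlg_eq_iSup, coordAlg_eq_iSup]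
  exact indep_iSup_of_disjoint (fun g => (measurable_pi_apply g).comap_le)
    hμ.iIndepFun_coord.iIndep hST

end IsBernoulli

end Bernoulli

section ConditionalKernel

variable {ℓ m : ℕ} {μ : Measure (Conf ℓ m)} [IsFiniteMeasure μ]

lemma condExpKernel_coordAlg_atomOn_eq_one {S S' : Set (FG ℓ)} (hS : S ⊆ S') :
    ∀ᵐ x ∂μ, condExpKernel μ (coordAlg S') x (atomOn S x) = 1 := by
  have hcoord : ∀ᵐ x ∂μ, ∀ (g : S) (c : Fin m),
      condExpKernel μ (coordAlg S') x {y | y g = c} = {y : Conf ℓ m | y g = c}.indicator 1 x :=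
    ae_all_iff.2 fun g => ae_all_iff.2 fun c =>
      condExpKernel_ae_eq_indicator (coordAlg_le S') (measurableSet_coordAlg_coord_eq (hS g.2) c)
  filter_upwards [hcoord] with x hx
  have hnull (g : S) : condExpKernel μ (coordAlg S') x {y | y g = x g}ᶜ = 0 := by
    rw [prob_compl_eq_zero_iff (coordAlg_le _ _ (measurableSet_coordAlg_coord_eq g.2 _))]
    simpa using hx g (x g)
  rw [← prob_compl_eq_zero_iff (coordAlg_le _ _ (measurableSet_coordAlg_atomOn S x))]
  refine measure_mono_null (fun y hy => ?_) (measure_iUnion_null hnull)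
  simpa [atomOn] using hy

lemma IsBernoulli.toReal_condExpKernel_atomOn_union {P : Fin m → ℝ} (hμ : IsBernoulli P μ)
    {S : Set (FG ℓ)} {T : Finset (FG ℓ)} (hST : Disjoint S ↑T) :
    ∀ᵐ x ∂μ, (condExpKernel μ (coordAlg S) x (atomOn (S ∪ ↑T) x)).toReal = ∏ g ∈ T, P (x g) := by
  -- The `T`-atom of `x` is one of countably many cylinders; treat them all at once.
  have hcyl : ∀ᵐ x ∂μ, ∀ σ : (↑T : Set (FG ℓ)) → Fin m,
      condExpKernel μ (coordAlg S) x ((↑T : Set (FG ℓ)).domRestrict ⁻¹' {σ}) =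
        μ ((↑T : Set (FG ℓ)).domRestrict ⁻¹' {σ}) :=
    ae_all_iff.2 fun σ => condExpKernel_ae_eq_of_indep (coordAlg_le S) (coordAlg_le ↑T)
      (hμ.indep_coordAlg hST.symm) ⟨{σ}, measurableSet_singleton σ, rfl⟩
  filter_upwards [hcyl, condExpKernel_coordAlg_atomOn_eq_one (μ := μ) subset_rfl] with x hT hS
  rw [atomOn_union, Set.inter_comm, measure_inter_conull
    ((prob_compl_eq_zero_iff (coordAlg_le _ _ (measurableSet_coordAlg_atomOn S x))).2 hS),
    atomOn_eq_preimage, hT, ← atomOn_eq_preimage, hμ.toReal_measure_atomOn]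

end ConditionalKernel

section Powers

variable {ℓ : ℕ} (a : Fin ℓ)

lemma of_pow_injective : Function.Injective fun i : ℕ => (FreeGroup.of a : FG ℓ) ^ i :=
  fun i j h => by simpa using congrArg FreeGroup.norm h

lemma of_pow_mem_Wa (i : ℕ) : (FreeGroup.of a : FG ℓ) ^ i ∈ Wa a := by
  cases i with
  | zero => exact Or.inl (pow_zero _)
  | succ k => exact Or.inr (by
      rw [wl, wl, pow_succ, mul_inv_cancel_right, ← pow_succ, FreeGroup.norm_of_pow,
        FreeGroup.norm_of_pow])

lemma setOf_eq_of_pow_eq_image (N : ℕ) :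
    {g : FG ℓ | ∃ i < N, g = FreeGroup.of a ^ i} =
      ↑((Finset.range N).image fun i => (FreeGroup.of a : FG ℓ) ^ i) := by
  ext g
  simp [eq_comm]

end Powers

theorem condInfo_pastAlg_shift_pow_general
    {ℓ m : ℕ} (a : Fin ℓ) (P : Fin m → ℝ)
    (hP : ∀ i, 0 < P i)
    (μp : Measure (Conf ℓ m)) [IsFiniteMeasure μp] (hμp : IsBernoulli P μp)
    (N : ℕ) :
    ∀ᵐ x ∂μp,
      condInfo μp (coordAlg (Wa a \ {g | ∃ i < N, g = (FreeGroup.of a) ^ i}))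
          (atomOn (Wa a) x) x
        = ∑ i ∈ Finset.range N, -Real.log (P (x ((FreeGroup.of a) ^ i))) ∧
      condInfo μp (pastAlg a)
          (atomOn (Wa a \ {g | ∃ i < N, g = (FreeGroup.of a) ^ i}) x) x = 0 ∧
      condInfo μp (coordAlg (Wa a \ {g | ∃ i < N, g = (FreeGroup.of a) ^ i}))
          (atomOn (Wa a) x) x
        - condInfo μp (pastAlg a)
            (atomOn (Wa a \ {g | ∃ i < N, g = (FreeGroup.of a) ^ i}) x) x
        = ∑ i ∈ Finset.range N, -Real.log (P (x ((FreeGroup.of a) ^ i))) := by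
  rw [setOf_eq_of_pow_eq_image]
  set T := (Finset.range N).image fun i => (FreeGroup.of a : FG ℓ) ^ i
  have hWa : Wa a \ ↑T ∪ ↑T = Wa a :=
    Set.sdiff_union_of_subset fun g hg => by
      obtain ⟨i, -, rfl⟩ := Finset.mem_image.1 hg
      exact of_pow_mem_Wa a i
  filter_upwards [hμp.toReal_condExpKernel_atomOn_union (S := Wa a \ ↑T) Set.disjoint_sdiff_left,
    condExpKernel_coordAlg_atomOn_eq_one (μ := μp) (S := Wa a \ ↑T) (S' := Wa a)
      Set.sdiff_subset]
    with x hkerA hkerB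
  rw [hWa] at hkerA
  have hA : condInfo μp (coordAlg (Wa a \ ↑T)) (atomOn (Wa a) x) x =
      ∑ i ∈ Finset.range N, -Real.log (P (x (FreeGroup.of a ^ i))) := by
    rw [condInfo, condProb, hkerA, Finset.prod_image fun i _ j _ h => of_pow_injective a h,
      Real.log_prod fun i _ => (hP _).ne', Finset.sum_neg_distrib]
  have hB : condInfo μp (pastAlg a) (atomOn (Wa a \ ↑T) x) x = 0 := by
    rw [condInfo, condProb, pastAlg, hkerB, ENNReal.toReal_one, Real.log_one, neg_zero]
  exact ⟨hA, hB, by rw [hA, hB, sub_zero]⟩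

theorem condInfo_pastAlg_shift_pow
    {ℓ m : ℕ} (hℓ : 1 ≤ ℓ) (a : Fin ℓ) (P : Fin m → ℝ)
    (hP : ∀ i, 0 < P i) (hPsum : ∑ i, P i = 1)
    (μp : Measure (Conf ℓ m)) [IsFiniteMeasure μp] (hμp : IsBernoulli P μp)
    (N : ℕ) (hN : 1 ≤ N) :
    ∀ᵐ x ∂μp,
      condInfo μp (coordAlg (Wa a \ {g | ∃ i < N, g = (FreeGroup.of a) ^ i}))
          (atomOn (Wa a) x) x
        = ∑ i ∈ Finset.range N, -Real.log (P (x ((FreeGroup.of a) ^ i))) ∧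
      condInfo μp (pastAlg a)
          (atomOn (Wa a \ {g | ∃ i < N, g = (FreeGroup.of a) ^ i}) x) x = 0 ∧
      condInfo μp (coordAlg (Wa a \ {g | ∃ i < N, g = (FreeGroup.of a) ^ i}))
          (atomOn (Wa a) x) x
        - condInfo μp (pastAlg a)
            (atomOn (Wa a \ {g | ∃ i < N, g = (FreeGroup.of a) ^ i}) x) x
        = ∑ i ∈ Finset.range N, -Real.log (P (x ((FreeGroup.of a) ^ i))) :=
  condInfo_pastAlg_shift_pow_general a P hP μp hμp N

end Finitary
end

section
/- For every ε > 0 and every finite collection Ω of measurable subsets of C, there exists h ∈ H_C such that |μ_C(hA ∩ B) − μ_C(A)·μ_C(B)| < ε for all A, B ∈ Ω; that is, the action of H_C on (C, μ_C) is weakly mixing. -/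
open MeasureTheory ProbabilityTheory Filter

/-!
Approximate every `A ∈ Ω`, up to `δ`, by `C ∩ D_A` where `D_A` depends only on finitely many
coordinates in the shell `N < |g| ≤ R`. Let `h⁺` swap the coordinates `g ∈ W_a` of that shell
with `g a^{R+1}`, and `h⁻` swap the remaining ones with `g a^{-(R+1)}`: a reduced word ending in
`a` (resp. not ending in `a`) stays reduced when `a^{R+1}` (resp. `a^{-(R+1)}`) is appended, so
`h⁺ h⁻` fixes `B(N)` and moves the whole shell beyond `B(R)`. Then `(h⁺ h⁻)⁻¹ D_A`, `C` and
`D_B` depend on pairwise disjoint coordinates, and independence of the Bernoulli coordinates gives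
`μ(h⁺ h⁻ A ∩ B) ≈ μ(C) μ(D_A) μ(D_B) ≈ μ(A) μ(B) / μ(C)`.
-/

open MeasureTheory ProbabilityTheory
open scoped symmDiff

namespace FreeGroup
variable {α : Type*} [DecidableEq α]

theorem toWord_mul_of_isReduced {x y : FreeGroup α} (h : IsReduced (x.toWord ++ y.toWord)) :
    (x * y).toWord = x.toWord ++ y.toWord := by
  rw [toWord_mul, h.reduce_eq]

theorem isReduced_toWord_append_replicate {x : FreeGroup α} {s : α × Bool}
    (h : ∀ t ∈ x.toWord.getLast?, t.1 = s.1 → t.2 = s.2) (n : ℕ) :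
    IsReduced (x.toWord ++ List.replicate n s) := by
  refine List.isChain_append.2 ⟨isReduced_toWord, List.isChain_replicate_of_rel _ fun _ => rfl, ?_⟩
  intro t ht u hu
  obtain rfl : u = s := by simp_all [List.head?_replicate]
  exact h t ht

theorem toWord_inv_of_pow (a : α) (n : ℕ) :
    ((of a ^ n)⁻¹).toWord = List.replicate n (a, false) := by
  simp [toWord_inv, toWord_of_pow, invRev]

end FreeGroup

section Exchange
variable {α : Type*} (t : α ≃ α) (K : Set α)

open Classical in
noncomputable def exchange (g : α) : α :=
  if g ∈ K then t g else if t.symm g ∈ K then t.symm g else g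

variable {t K}

theorem exchange_of_mem {g : α} (hg : g ∈ K) : exchange t K g = t g := by
  simp [exchange, hg]

theorem exchange_of_not_mem {g : α} (hg : g ∉ K) (hg' : t.symm g ∉ K) : exchange t K g = g := by
  simp [exchange, hg, hg']

theorem exchange_involutive (hK : ∀ g ∈ K, t g ∉ K) : Function.Involutive (exchange t K) := by
  intro g
  by_cases hg : g ∈ K
  · rw [exchange_of_mem hg, exchange, if_neg (hK g hg), Equiv.symm_apply_apply, if_pos hg]
  by_cases hg' : t.symm g ∈ K
  · have : exchange t K g = t.symm g := by simp [exchange, hg, hg']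
    rw [this, exchange_of_mem hg', Equiv.apply_symm_apply]
  · rw [exchange_of_not_mem hg hg', exchange_of_not_mem hg hg']

theorem setOf_exchange_ne_subset : {g | exchange t K g ≠ g} ⊆ K ∪ t '' K := by
  intro g hg
  by_contra h
  simp only [Set.mem_union, Set.mem_image, not_or, not_exists, not_and] at h
  exact hg (exchange_of_not_mem h.1 fun h' => h.2 _ h' (t.apply_symm_apply g))

end Exchange

def coordPerm {ι X : Type*} (σ : Equiv.Perm ι) : Equiv.Perm (ι → X) where
  toFun x := x ∘ σ
  invFun x := x ∘ σ.symm
  left_inv x := by ext; simp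
  right_inv x := by ext; simp

@[simp]
theorem coordPerm_apply {ι X : Type*} (σ : Equiv.Perm ι) (x : ι → X) : coordPerm σ x = x ∘ σ :=
  rfl

section DependsOn
variable {ι X : Type*}

theorem DependsOn.mem_iff {D : Set (ι → X)} {s : Set ι} (hD : DependsOn (· ∈ D) s) {x y : ι → X}
    (h : ∀ i ∈ s, x i = y i) : x ∈ D ↔ y ∈ D :=
  Iff.of_eq (hD h)

theorem DependsOn.mem_inter {D₁ D₂ : Set (ι → X)} {s t : Set ι} (h₁ : DependsOn (· ∈ D₁) s)
    (h₂ : DependsOn (· ∈ D₂) t) : DependsOn (· ∈ D₁ ∩ D₂) (s ∪ t) := fun x y h => by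
  simp only [Set.mem_inter_iff, eq_iff_iff]
  rw [h₁.mem_iff fun i hi => h i (Or.inl hi), h₂.mem_iff fun i hi => h i (Or.inr hi)]

theorem DependsOn.mem_preimage_comp {D : Set (ι → X)} {s : Set ι} (hD : DependsOn (· ∈ D) s)
    (σ : ι → ι) : DependsOn (· ∈ (fun x => x ∘ σ) ⁻¹' D) (σ '' s) :=
  fun _ _ h => hD fun i hi => h (σ i) ⟨i, hi, rfl⟩

theorem DependsOn.eq_preimage_restrict {D : Set (ι → X)} {T : Finset ι}
    (hD : DependsOn (· ∈ D) T) : D = T.restrict ⁻¹' (T.restrict '' D) := by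
  refine (Set.subset_preimage_image _ _).antisymm fun x ⟨y, hy, hxy⟩ => ?_
  exact (hD.mem_iff fun i hi => (congrFun hxy ⟨i, hi⟩).symm).2 hy

theorem DependsOn.measurableSet [MeasurableSpace X] [Countable X] [MeasurableSingletonClass X]
    {D : Set (ι → X)} {T : Finset ι} (hD : DependsOn (· ∈ D) T) : MeasurableSet D := by
  rw [hD.eq_preimage_restrict]
  exact (Set.to_countable _).measurableSet.preimage (Finset.measurable_restrict T)

end DependsOn

theorem exists_measureReal_symmDiff_cylinder_lt {ι : Type*} {X : ι → Type*}
    [∀ i, MeasurableSpace (X i)] (μ : Measure (Π i, X i)) [IsFiniteMeasure μ]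
    {A : Set (Π i, X i)} (hA : MeasurableSet A) {ε : ℝ} (hε : 0 < ε) :
    ∃ (T : Finset ι) (S : Set (Π i : T, X i)), MeasurableSet S ∧
      μ.real (A ∆ cylinder T S) < ε := by
  have hdense := Measure.MeasureDense.of_generateFrom_isSetAlgebra_finite μ
    ⟨empty_mem_measurableCylinders X, fun _ => compl_mem_measurableCylinders,
      fun _ _ => union_mem_measurableCylinders⟩ generateFrom_measurableCylinders.symm
  obtain ⟨_, hD, hlt⟩ := hdense.approx A hA (measure_ne_top μ A) ε hε
  obtain ⟨T, S, hS, rfl⟩ := (mem_measurableCylinders _).1 hD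
  exact ⟨T, S, hS, (ENNReal.lt_ofReal_iff_toReal_lt (measure_ne_top μ _)).1 hlt⟩

theorem exists_dependsOn_disjoint_approx {ι X : Type*} [MeasurableSpace X] [DecidableEq ι]
    (μ : Measure (ι → X)) [IsFiniteMeasure μ] (B : Finset ι) (η : ι → X) {A : Set (ι → X)}
    (hA : MeasurableSet A) (hAB : A ⊆ {x | ∀ i ∈ B, x i = η i}) {ε : ℝ} (hε : 0 < ε) :
    ∃ (T : Finset ι) (D : Set (ι → X)), Disjoint B T ∧ DependsOn (· ∈ D) T ∧
      μ.real (A ∆ ({x | ∀ i ∈ B, x i = η i} ∩ D)) < ε := by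
  obtain ⟨T, S, -, hlt⟩ := exists_measureReal_symmDiff_cylinder_lt μ hA hε
  set C := {x : ι → X | ∀ i ∈ B, x i = η i}
  have hcyl : DependsOn (· ∈ cylinder (α := fun _ => X) T S) T := fun x y h => by
    simp only [mem_cylinder]; rw [Finset.dependsOn_restrict T h]
  -- overwriting the coordinates in `B` by `η` frees the approximant from them
  -- without changing it on `C`
  refine ⟨T \ B, (fun x => Function.updateFinset x B (B.restrict η)) ⁻¹'
      cylinder (α := fun _ => X) T S, Finset.disjoint_sdiff,
    by simpa using hcyl.updateFinset (B.restrict η), lt_of_le_of_lt ?_ hlt⟩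
  have hCD : C ∩ (fun x => Function.updateFinset x B (B.restrict η)) ⁻¹' cylinder T S
      = C ∩ cylinder T S := by
    ext x
    simp only [Set.mem_inter_iff, Set.mem_preimage, and_congr_right_iff]
    intro hx
    have : B.restrict η = B.restrict x := funext fun i => (hx i i.2).symm
    rw [this, Function.updateFinset_restrict]
  rw [hCD]
  refine measureReal_mono fun x hx => ?_
  simp only [Set.mem_symmDiff, Set.mem_inter_iff] at hx ⊢
  have := @hAB x
  tauto

theorem abs_div_sub_div_mul_div_lt {c t t' a a' b b' δ : ℝ} (hc : 0 < c) (ht : |t - t'| < 2 * δ)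
    (ha : |a - a'| < δ) (hb : |b - b'| < δ) (ha₀ : 0 ≤ a) (hac : a ≤ c) (hb₀ : 0 ≤ b')
    (hbc : b' ≤ c) (hprod : t' * c = a' * b') : |t / c - a / c * (b / c)| < 4 * δ / c := by
  have hδ : 0 ≤ δ := (abs_nonneg _).trans ha.le
  have key : |t * c - a * b| < 4 * δ * c := by
    have hsplit : t * c - a * b = (t - t') * c + (a' - a) * b' + a * (b' - b) := by
      linear_combination hprod
    have h₁ : |(t - t') * c| < 2 * δ * c := by
      rw [abs_mul, abs_of_pos hc]; exact mul_lt_mul_of_pos_right ht hc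
    have h₂ : |(a' - a) * b'| ≤ δ * c := by
      rw [abs_mul, abs_of_nonneg hb₀, abs_sub_comm]; exact mul_le_mul ha.le hbc hb₀ hδ
    have h₃ : |a * (b' - b)| ≤ c * δ := by
      rw [abs_mul, abs_of_nonneg ha₀, abs_sub_comm]
      exact mul_le_mul hac hb.le (abs_nonneg _) hc.le
    rw [hsplit]
    calc _ ≤ |(t - t') * c| + |(a' - a) * b'| + |a * (b' - b)| := abs_add_three _ _ _
      _ < 4 * δ * c := by linarith
  rw [show t / c - a / c * (b / c) = (t * c - a * b) / c ^ 2 by field_simp, abs_div,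
    abs_of_pos (pow_pos hc 2), div_lt_iff₀ (pow_pos hc 2)]
  calc _ < 4 * δ * c := key
    _ = 4 * δ / c * c ^ 2 := by field_simp

namespace Finitary
open FreeGroup

section Words
variable {ℓ : ℕ} {a : Fin ℓ}

theorem wl_eq_length (g : FG ℓ) : wl g = g.toWord.length := rfl

theorem ball_finite (r : ℕ) : (ball ℓ r).Finite :=
  ((List.finite_length_le _ r).preimage toWord_injective.injOn).subset fun _ hg => hg

theorem mem_Wa_iff_getLast? {g : FG ℓ} :
    g ∈ Wa a ↔ ∀ t ∈ g.toWord.getLast?, t = (a, true) := by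
  constructor
  · rintro (rfl | hlen) t ht
    · simp at ht
    by_contra hne
    have hred : IsReduced (g.toWord ++ ((of a ^ 1)⁻¹).toWord) := by
      rw [toWord_inv_of_pow]
      refine isReduced_toWord_append_replicate (fun t' ht' ht1 => ?_) 1
      obtain rfl := Option.mem_unique ht ht'
      exact Bool.eq_false_iff.2 fun ht2 => hne (Prod.ext ht1 ht2)
    rw [pow_one] at hred
    have := congrArg List.length (toWord_mul_of_isReduced hred)
    simp only [List.length_append, toWord_inv, toWord_of] at this
    simp [wl_eq_length, this, invRev] at hlen
    omega
  · intro h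
    rcases List.eq_nil_or_concat g.toWord with hnil | ⟨L, t, hL⟩
    · exact Or.inl (toWord_eq_nil_iff.1 hnil)
    rw [List.concat_eq_append] at hL
    obtain rfl : t = (a, true) := h t (by simp [hL])
    have hLred : IsReduced L := isReduced_toWord.infix (by rw [hL]; exact List.infix_append [] L _)
    have hstep : Red.Step (L ++ [(a, true), (a, false)]) L := by
      simpa using Red.Step.not (L₁ := L) (L₂ := []) (x := a) (b := true)
    have : (g * (of a)⁻¹).toWord = L := by
      rw [toWord_mul, hL, toWord_inv, toWord_of]
      simpa [invRev, reduce.Step.eq hstep] using hLred.reduce_eq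
    right
    simp [wl_eq_length, this, hL]

theorem toWord_mul_of_pow {g : FG ℓ} (hg : g ∈ Wa a) (n : ℕ) :
    (g * of a ^ n).toWord = g.toWord ++ List.replicate n (a, true) := by
  rw [← toWord_of_pow]
  refine toWord_mul_of_isReduced ?_
  rw [toWord_of_pow]
  exact isReduced_toWord_append_replicate (fun t ht _ => by rw [mem_Wa_iff_getLast?.1 hg t ht]) n

theorem toWord_mul_inv_of_pow {g : FG ℓ} (hg : g ∉ Wa a) (n : ℕ) :
    (g * (of a ^ n)⁻¹).toWord = g.toWord ++ List.replicate n (a, false) := by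
  rw [← toWord_inv_of_pow]
  refine toWord_mul_of_isReduced ?_
  rw [toWord_inv_of_pow]
  refine isReduced_toWord_append_replicate (fun t ht ht1 => ?_) n
  rw [mem_Wa_iff_getLast?] at hg
  push Not at hg
  obtain ⟨t', ht', hne⟩ := hg
  obtain rfl := Option.mem_unique ht ht'
  exact Bool.eq_false_iff.2 fun ht2 => hne (Prod.ext ht1 ht2)

theorem wl_mul_of_pow {g : FG ℓ} (hg : g ∈ Wa a) (n : ℕ) : wl (g * of a ^ n) = wl g + n := by
  simp [wl_eq_length, toWord_mul_of_pow hg]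

theorem wl_mul_inv_of_pow {g : FG ℓ} (hg : g ∉ Wa a) (n : ℕ) :
    wl (g * (of a ^ n)⁻¹) = wl g + n := by
  simp [wl_eq_length, toWord_mul_inv_of_pow hg]

theorem mul_of_pow_mem_Wa {g : FG ℓ} (hg : g ∈ Wa a) (n : ℕ) : g * of a ^ n ∈ Wa a := by
  rcases n.eq_zero_or_pos with rfl | hn
  · simpa using hg
  rw [mem_Wa_iff_getLast?, toWord_mul_of_pow hg]
  simp [List.getLast?_append, List.getLast?_replicate, hn.ne']

theorem mul_inv_of_pow_not_mem_Wa {g : FG ℓ} (hg : g ∉ Wa a) (n : ℕ) :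
    g * (of a ^ n)⁻¹ ∉ Wa a := by
  rcases n.eq_zero_or_pos with rfl | hn
  · simpa using hg
  rw [mem_Wa_iff_getLast?, toWord_mul_inv_of_pow hg]
  simp [List.getLast?_append, List.getLast?_replicate, hn.ne']

end Words

section Shell
variable {ℓ : ℕ} (S : Set (FG ℓ)) (c : FG ℓ) (N R : ℕ)

def shell : Set (FG ℓ) := {g | g ∈ S ∧ N < wl g ∧ wl g ≤ R}

variable {S c N R}

theorem exchange_shell_involutive (hc : ∀ g ∈ S, g * c ∈ S ∧ wl (g * c) = wl g + (R + 1)) :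
    Function.Involutive (exchange (Equiv.mulRight c) (shell S N R)) :=
  exchange_involutive fun g hg hgc => by
    have := (hc g hg.1).2
    have := hgc.2.2
    simp only [Equiv.coe_mulRight] at *
    omega

theorem exchange_shell_eq_self (hc : ∀ g ∈ S, g * c ∈ S ∧ wl (g * c) = wl g + (R + 1))
    {g : FG ℓ} (hg : g ∉ S ∨ wl g ≤ N) : exchange (Equiv.mulRight c) (shell S N R) g = g := by
  refine exchange_of_not_mem (fun h => hg.elim (· h.1) fun hN => absurd h.2.1 (by omega)) ?_
  rintro ⟨hS, hN, -⟩
  have hgc := hc _ hS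
  simp only [Equiv.mulRight_symm_apply, inv_mul_cancel_right] at hgc hN
  exact hg.elim (· hgc.1) fun hN' => by omega

theorem exchange_shell_support_finite :
    {g | exchange (Equiv.mulRight c) (shell S N R) g ≠ g}.Finite := by
  have hfin : (shell S N R).Finite := (ball_finite R).subset fun g hg => hg.2.2
  exact (hfin.union (hfin.image _)).subset setOf_exchange_ne_subset

end Shell

section Bernoulli
variable {ℓ m : ℕ} {P : Fin m → ℝ} {μ : Measure (Conf ℓ m)}

theorem IsBernoulli.measure_cylinder (hμ : IsBernoulli P μ) (A : Finset (FG ℓ))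
    (σ : FG ℓ → Fin m) : μ {x | ∀ g ∈ A, x g = σ g} = ∏ g ∈ A, μ {x | x g = σ g} := by
  have := hμ.1
  rw [← ENNReal.toReal_eq_toReal_iff' (measure_ne_top _ _)
    (ENNReal.prod_ne_top fun _ _ => measure_ne_top _ _), ENNReal.toReal_prod, hμ.2]
  refine Finset.prod_congr rfl fun g _ => ?_
  simpa using (hμ.2 {g} σ).symm

theorem IsBernoulli.iIndepFun_eval (hμ : IsBernoulli P μ) :
    iIndepFun (fun g (x : Conf ℓ m) => x g) μ := by
  have := hμ.1
  have : Nonempty (Fin m) := ⟨(nonempty_of_isProbabilityMeasure μ).some 1⟩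
  rw [iIndepFun_iff_finset]
  intro s
  show iIndepFun (fun (i : s) (x : Conf ℓ m) => x i) μ
  rw [iIndepFun_iff_map_fun_eq_pi_map (fun _ => (measurable_pi_apply _).aemeasurable)]
  refine Measure.ext_of_singleton fun y => ?_
  classical
  let σ : FG ℓ → Fin m := fun g => if h : g ∈ s then y ⟨g, h⟩ else Classical.arbitrary _
  have hcyl : (fun x (i : s) => x i) ⁻¹' {y} = {x : Conf ℓ m | ∀ g ∈ s, x g = σ g} := by
    ext x
    simp +contextual [σ, funext_iff]
  rw [Measure.map_apply (by fun_prop) (measurableSet_singleton _), ← Set.univ_pi_singleton,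
    Measure.pi_pi, Set.univ_pi_singleton, hcyl, hμ.measure_cylinder, ← Finset.prod_coe_sort]
  refine Finset.prod_congr rfl fun g _ => ?_
  rw [Measure.map_apply (measurable_pi_apply _) (measurableSet_singleton _)]
  simp [σ, Set.preimage]

theorem IsBernoulli.map_eval (hμ : IsBernoulli P μ) (g h : FG ℓ) :
    μ.map (fun x => x g) = μ.map (fun x => x h) := by
  have := hμ.1
  refine Measure.ext_of_singleton fun i => ?_
  rw [Measure.map_apply (measurable_pi_apply _) (measurableSet_singleton _),
    Measure.map_apply (measurable_pi_apply _) (measurableSet_singleton _),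
    ← ENNReal.toReal_eq_toReal_iff' (measure_ne_top _ _) (measure_ne_top _ _)]
  simpa [Set.preimage] using (hμ.2 {g} fun _ => i).trans (hμ.2 {h} fun _ => i).symm

theorem IsBernoulli.measurePreserving_coordPerm (hμ : IsBernoulli P μ)
    (σ : Equiv.Perm (FG ℓ)) : MeasurePreserving (coordPerm σ) μ μ := by
  have := hμ.1
  refine ⟨measurable_pi_lambda _ fun g => measurable_pi_apply (σ g), ?_⟩
  have h₁ := (iIndepFun_iff_map_fun_eq_infinitePi_map (fun _ => measurable_pi_apply _)).1
    (hμ.iIndepFun_eval.precomp σ.injective)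
  have h₂ := (iIndepFun_iff_map_fun_eq_infinitePi_map (fun _ => measurable_pi_apply _)).1
    hμ.iIndepFun_eval
  have hmarg : (fun g => μ.map (fun x : Conf ℓ m => x (σ g))) = fun g => μ.map (fun x => x g) :=
    funext fun g => hμ.map_eval _ _
  calc μ.map (coordPerm σ) = _ := h₁
    _ = μ.map (fun x g => x g) := by rw [hmarg, h₂]
    _ = μ := Measure.map_id'

theorem IsBernoulli.measureReal_cylOn_pos (hμ : IsBernoulli P μ) (hP : ∀ i, 0 < P i)
    {S : Set (FG ℓ)} (hS : S.Finite) (η : FG ℓ → Fin m) : 0 < μ.real (cylOn S η) := by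
  have : cylOn S η = {x | ∀ g ∈ hS.toFinset, x g = η g} := by simp [cylOn]
  rw [this, measureReal_def, hμ.2]
  exact Finset.prod_pos fun g _ => hP _

theorem IsBernoulli.measure_inter_of_dependsOn (hμ : IsBernoulli P μ) {T₁ T₂ : Finset (FG ℓ)}
    (hT : Disjoint T₁ T₂) {D₁ D₂ : Set (Conf ℓ m)} (h₁ : DependsOn (· ∈ D₁) (T₁ : Set (FG ℓ)))
    (h₂ : DependsOn (· ∈ D₂) (T₂ : Set (FG ℓ))) : μ (D₁ ∩ D₂) = μ D₁ * μ D₂ := by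
  rw [h₁.eq_preimage_restrict, h₂.eq_preimage_restrict]
  exact (hμ.iIndepFun_eval.indepFun_finset T₁ T₂ hT measurable_pi_apply
    ).measure_inter_preimage_eq_mul _ _ (Set.to_countable _).measurableSet
      (Set.to_countable _).measurableSet

theorem IsBernoulli.measureReal_preimage_inter_mul (hμ : IsBernoulli P μ)
    {S T₁ T₂ : Finset (FG ℓ)} {C D₁ D₂ : Set (Conf ℓ m)}
    (hC : DependsOn (· ∈ C) (S : Set (FG ℓ))) (h₁ : DependsOn (· ∈ D₁) (T₁ : Set (FG ℓ)))
    (h₂ : DependsOn (· ∈ D₂) (T₂ : Set (FG ℓ))) (hS₁ : Disjoint S T₁) (hS₂ : Disjoint S T₂)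
    {τ : Equiv.Perm (FG ℓ)} (hτS : ∀ g ∈ S, τ g = g) (hτ : ∀ g ∈ T₁, τ g ∉ S ∧ τ g ∉ T₂) :
    μ.real (coordPerm τ ⁻¹' (C ∩ D₁) ∩ (C ∩ D₂)) * μ.real C
      = μ.real (C ∩ D₁) * μ.real (C ∩ D₂) := by
  classical
  have hCτ : coordPerm τ ⁻¹' C = C :=
    Set.ext fun x => hC.mem_iff fun g hg => by simp [hτS g hg]
  have hτ₁ : DependsOn (· ∈ coordPerm τ ⁻¹' D₁) ((T₁.image τ : Finset (FG ℓ)) : Set (FG ℓ)) := by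
    rw [Finset.coe_image]; exact h₁.mem_preimage_comp τ
  have hτ₁₂ : DependsOn (· ∈ coordPerm τ ⁻¹' D₁ ∩ D₂)
      ((T₁.image τ ∪ T₂ : Finset (FG ℓ)) : Set (FG ℓ)) := by
    rw [Finset.coe_union]; exact hτ₁.mem_inter h₂
  have hdisj : Disjoint (T₁.image τ) T₂ := Finset.disjoint_left.2 fun g hg => by
    obtain ⟨g', hg', rfl⟩ := Finset.mem_image.1 hg
    exact (hτ g' hg').2
  have hdisj' : Disjoint S (T₁.image τ ∪ T₂) := Finset.disjoint_union_right.2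
    ⟨Finset.disjoint_right.2 fun g hg => by
      obtain ⟨g', hg', rfl⟩ := Finset.mem_image.1 hg
      exact (hτ g' hg').1, hS₂⟩
  have hset : coordPerm τ ⁻¹' (C ∩ D₁) ∩ (C ∩ D₂) = C ∩ (coordPerm τ ⁻¹' D₁ ∩ D₂) := by
    rw [Set.preimage_inter, hCτ]
    ext x; simp only [Set.mem_inter_iff]; tauto
  have hpre : μ (coordPerm τ ⁻¹' D₁) = μ D₁ :=
    (hμ.measurePreserving_coordPerm τ).measure_preimage h₁.measurableSet.nullMeasurableSet
  simp only [measureReal_def, ← ENNReal.toReal_mul, hset,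
    hμ.measure_inter_of_dependsOn hdisj' hC hτ₁₂, hμ.measure_inter_of_dependsOn hdisj hτ₁ h₂,
    hμ.measure_inter_of_dependsOn hS₁ hC h₁, hμ.measure_inter_of_dependsOn hS₂ hC h₂, hpre]
  ring_nf


theorem exists_dependsOn_approx_cylOn_ball [IsFiniteMeasure μ] {N : ℕ} (η : FG ℓ → Fin m)
    {A : Set (Conf ℓ m)} (hA : MeasurableSet A) (hAC : A ⊆ cylOn (ball ℓ N) η) {ε : ℝ}
    (hε : 0 < ε) : ∃ (T : Finset (FG ℓ)) (D : Set (Conf ℓ m)), (∀ g ∈ T, N < wl g) ∧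
      DependsOn (· ∈ D) (T : Set (FG ℓ)) ∧ μ.real (A ∆ (cylOn (ball ℓ N) η ∩ D)) < ε := by
  classical
  have hC : {x : Conf ℓ m | ∀ g ∈ (ball_finite N).toFinset, x g = η g} = cylOn (ball ℓ N) η := by
    simp [cylOn]
  obtain ⟨T, D, hBT, hD, hlt⟩ :=
    exists_dependsOn_disjoint_approx μ (ball_finite N).toFinset η hA (hC ▸ hAC) hε
  refine ⟨T, D, fun g hg => not_le.1 fun hgN => ?_, hD, hC ▸ hlt⟩
  exact Finset.disjoint_left.1 hBT (by simpa [ball] using hgN) hg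

theorem relMeas_preimage_inter_sub_lt [IsFiniteMeasure μ] {f : Conf ℓ m → Conf ℓ m}
    (hf : MeasurePreserving f μ μ) {C A B A' B' : Set (Conf ℓ m)} (hA : MeasurableSet A)
    (hB : MeasurableSet B) (hA' : MeasurableSet A') (hB' : MeasurableSet B') (hAC : A ⊆ C)
    (hB'C : B' ⊆ C) (hC : 0 < μ.real C) {δ : ℝ} (hAA' : μ.real (A ∆ A') < δ)
    (hBB' : μ.real (B ∆ B') < δ)
    (hprod : μ.real (f ⁻¹' A' ∩ B') * μ.real C = μ.real A' * μ.real B') :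
    |relMeas μ C (f ⁻¹' A ∩ B) - relMeas μ C A * relMeas μ C B| < 4 * δ / μ.real C := by
  have hsub : (f ⁻¹' A ∩ B) ∆ (f ⁻¹' A' ∩ B') ⊆ f ⁻¹' (A ∆ A') ∪ B ∆ B' := fun x hx => by
    simp only [Set.mem_symmDiff, Set.mem_inter_iff, Set.mem_union, Set.mem_preimage] at hx ⊢
    tauto
  refine abs_div_sub_div_mul_div_lt hC ?_
    ((abs_measureReal_sub_le_measureReal_symmDiff hA.nullMeasurableSet
      hA'.nullMeasurableSet).trans_lt hAA')
    ((abs_measureReal_sub_le_measureReal_symmDiff hB.nullMeasurableSet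
      hB'.nullMeasurableSet).trans_lt hBB')
    measureReal_nonneg (measureReal_mono hAC) measureReal_nonneg (measureReal_mono hB'C) hprod
  calc _ ≤ μ.real ((f ⁻¹' A ∩ B) ∆ (f ⁻¹' A' ∩ B')) :=
        abs_measureReal_sub_le_measureReal_symmDiff
          ((hf.measurable hA).inter hB).nullMeasurableSet
          ((hf.measurable hA').inter hB').nullMeasurableSet
    _ ≤ μ.real (f ⁻¹' (A ∆ A')) + μ.real (B ∆ B') :=
        (measureReal_mono hsub).trans (measureReal_union_le _ _)
    _ < 2 * δ := by
        rw [hf.measureReal_preimage (hA.symmDiff hA').nullMeasurableSet]; linarith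

theorem IsBernoulli.relMeas_coordPerm_preimage_inter_sub_lt (hμ : IsBernoulli P μ)
    (η : FG ℓ → Fin m) {N R : ℕ} (hC : 0 < μ.real (cylOn (ball ℓ N) η))
    {τ : Equiv.Perm (FG ℓ)} (hfix : ∀ g ∈ ball ℓ N, τ g = g)
    (hpush : ∀ g, N < wl g → wl g ≤ R → R < wl (τ g)) {A B D₁ D₂ : Set (Conf ℓ m)}
    {T₁ T₂ : Finset (FG ℓ)} (hA : MeasurableSet A) (hB : MeasurableSet B)
    (hAC : A ⊆ cylOn (ball ℓ N) η) (hT₁ : ∀ g ∈ T₁, N < wl g ∧ wl g ≤ R)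
    (hT₂ : ∀ g ∈ T₂, N < wl g ∧ wl g ≤ R) (hD₁ : DependsOn (· ∈ D₁) (T₁ : Set (FG ℓ)))
    (hD₂ : DependsOn (· ∈ D₂) (T₂ : Set (FG ℓ))) {δ : ℝ}
    (hAD : μ.real (A ∆ (cylOn (ball ℓ N) η ∩ D₁)) < δ)
    (hBD : μ.real (B ∆ (cylOn (ball ℓ N) η ∩ D₂)) < δ) :
    |relMeas μ (cylOn (ball ℓ N) η) (coordPerm τ ⁻¹' A ∩ B) -
        relMeas μ (cylOn (ball ℓ N) η) A * relMeas μ (cylOn (ball ℓ N) η) B|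
      < 4 * δ / μ.real (cylOn (ball ℓ N) η) := by
  have := hμ.1
  set BN := (ball_finite (ℓ := ℓ) N).toFinset
  have hmem : ∀ g, g ∈ BN ↔ wl g ≤ N := fun g => by simp [BN, ball]
  have hCdep : DependsOn (· ∈ cylOn (ball ℓ N) η) (BN : Set (FG ℓ)) := fun x y h =>
    propext (forall₂_congr fun g hg => by rw [h g (by simpa [BN] using hg)])
  have hdisj : ∀ {T : Finset (FG ℓ)}, (∀ g ∈ T, N < wl g ∧ wl g ≤ R) → Disjoint BN T :=
    fun hT => Finset.disjoint_right.2 fun g hg hgN => by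
      have := (hT g hg).1
      have := (hmem g).1 hgN
      omega
  refine relMeas_preimage_inter_sub_lt (hμ.measurePreserving_coordPerm τ) hA hB
    (hCdep.measurableSet.inter hD₁.measurableSet) (hCdep.measurableSet.inter hD₂.measurableSet)
    hAC Set.inter_subset_left hC hAD hBD
    (hμ.measureReal_preimage_inter_mul hCdep hD₁ hD₂ (hdisj hT₁) (hdisj hT₂)
      (fun g hg => hfix g ((hmem g).1 hg)) fun g hg => ?_)
  obtain ⟨hNg, hgR⟩ := hT₁ g hg
  have hτg := hpush g hNg hgR
  refine ⟨fun h => ?_, fun h => ?_⟩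
  · have := (hmem _).1 h
    omega
  · have := (hT₂ _ h).2
    omega


theorem coordPerm_isLocallyFiniteMP (hμ : IsBernoulli P μ) {σ : Equiv.Perm (FG ℓ)}
    (hσ : {g | σ g ≠ g}.Finite) : IsLocallyFiniteMP μ (coordPerm σ) :=
  ⟨(hμ.measurePreserving_coordPerm σ).measurable, (hμ.measurePreserving_coordPerm σ⁻¹).measurable,
    hμ.measurePreserving_coordPerm σ,
    ae_of_all _ fun x => hσ.subset fun g hg hσg => hg (by simp [hσg])⟩

theorem coordPerm_mem_HCplus (hμ : IsBernoulli P μ) {a : Fin ℓ} {N : ℕ} {σ : Equiv.Perm (FG ℓ)}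
    (hσ : {g | σ g ≠ g}.Finite) (hfix : ∀ g ∈ ball ℓ N ∪ (Wa a)ᶜ, σ g = g) :
    coordPerm σ ∈ HCplus μ a N :=
  ⟨coordPerm_isLocallyFiniteMP hμ hσ, ae_of_all _ fun x g hg => by simp [hfix g hg]⟩

theorem coordPerm_mem_HCminus (hμ : IsBernoulli P μ) {a : Fin ℓ} {N : ℕ} {σ : Equiv.Perm (FG ℓ)}
    (hσ : {g | σ g ≠ g}.Finite) (hfix : ∀ g ∈ Wa a ∪ ball ℓ N, σ g = g) :
    coordPerm σ ∈ HCminus μ a N :=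
  ⟨coordPerm_isLocallyFiniteMP hμ hσ, ae_of_all _ fun x g hg => by simp [hfix g hg]⟩

theorem exists_HCplus_HCminus_pushing_shell (hμ : IsBernoulli P μ) (a : Fin ℓ) (N R : ℕ) :
    ∃ hplus ∈ HCplus μ a N, ∃ hminus ∈ HCminus μ a N, ∃ τ : Equiv.Perm (FG ℓ),
      (hplus * hminus)⁻¹ = coordPerm τ ∧ (∀ g ∈ ball ℓ N, τ g = g) ∧
      ∀ g, N < wl g → wl g ≤ R → R < wl (τ g) := by
  have hcp : ∀ g ∈ Wa a, g * of a ^ (R + 1) ∈ Wa a ∧ wl (g * of a ^ (R + 1)) = wl g + (R + 1) :=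
    fun g hg => ⟨mul_of_pow_mem_Wa hg _, wl_mul_of_pow hg _⟩
  have hcm : ∀ g ∈ (Wa a)ᶜ, g * (of a ^ (R + 1))⁻¹ ∈ (Wa a)ᶜ ∧
      wl (g * (of a ^ (R + 1))⁻¹) = wl g + (R + 1) :=
    fun g hg => ⟨mul_inv_of_pow_not_mem_Wa hg _, wl_mul_inv_of_pow hg _⟩
  set σp := (exchange_shell_involutive (N := N) hcp).toPerm
  set σm := (exchange_shell_involutive (N := N) hcm).toPerm
  have hfixp : ∀ g, g ∉ Wa a ∨ wl g ≤ N → σp g = g := fun g => exchange_shell_eq_self hcp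
  have hfixm : ∀ g, g ∈ Wa a ∨ wl g ≤ N → σm g = g := fun g hg =>
    exchange_shell_eq_self hcm (by simpa using hg)
  refine ⟨coordPerm σp, coordPerm_mem_HCplus hμ exchange_shell_support_finite
      fun g hg => hfixp g hg.symm,
    coordPerm σm, coordPerm_mem_HCminus hμ exchange_shell_support_finite fun g hg => hfixm g hg,
    σp * σm, rfl, fun g hg => by simp [hfixm g (Or.inr hg), hfixp g (Or.inr hg)], ?_⟩
  intro g hN hR
  rw [Equiv.Perm.mul_apply]
  by_cases hg : g ∈ Wa a
  · have : σp g = g * of a ^ (R + 1) := exchange_of_mem ⟨hg, hN, hR⟩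
    rw [hfixm g (Or.inl hg), this, wl_mul_of_pow hg]
    omega
  · have : σm g = g * (of a ^ (R + 1))⁻¹ := exchange_of_mem ⟨hg, hN, hR⟩
    rw [this, hfixp _ (Or.inl (mul_inv_of_pow_not_mem_Wa hg _)), wl_mul_inv_of_pow hg]
    omega

end Bernoulli

theorem HC_weaklyMixing_general
    {ℓ m : ℕ} (a : Fin ℓ) (P : Fin m → ℝ)
    (hP : ∀ i, 0 < P i)
    (μp : Measure (Conf ℓ m)) (hμp : IsBernoulli P μp)
    (N : ℕ) (η : FG ℓ → Fin m) :
    ∀ ε > (0 : ℝ), ∀ Ω : Finset (Set (Conf ℓ m)),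
      (∀ A ∈ Ω, MeasurableSet A ∧ A ⊆ cylOn (ball ℓ N) η) →
      ∃ hplus ∈ HCplus μp a N, ∃ hminus ∈ HCminus μp a N, ∀ A ∈ Ω, ∀ B ∈ Ω,
        |relMeas μp (cylOn (ball ℓ N) η) ((⇑(hplus * hminus)) '' A ∩ B) -
          relMeas μp (cylOn (ball ℓ N) η) A * relMeas μp (cylOn (ball ℓ N) η) B| < ε := by
  intro ε hε Ω hΩ
  classical
  have := hμp.1
  have hC := hμp.measureReal_cylOn_pos hP (ball_finite N) η
  have hδ : 0 < ε * μp.real (cylOn (ball ℓ N) η) / 4 := by positivity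
  choose! T D hTN hD happrox using fun A hA =>
    exists_dependsOn_approx_cylOn_ball (μ := μp) η (hΩ A hA).1 (hΩ A hA).2 hδ
  set R := (Ω.biUnion T).sup wl
  have hT : ∀ A ∈ Ω, ∀ g ∈ T A, N < wl g ∧ wl g ≤ R := fun A hA g hg =>
    ⟨hTN A hA g hg, Finset.le_sup (Finset.mem_biUnion.2 ⟨A, hA, hg⟩)⟩
  obtain ⟨hplus, hplus_mem, hminus, hminus_mem, τ, hinv, hfix, hpush⟩ :=
    exists_HCplus_HCminus_pushing_shell hμp a N R
  refine ⟨hplus, hplus_mem, hminus, hminus_mem, fun A hA B hB => ?_⟩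
  rw [Equiv.image_eq_preimage_symm, ← Equiv.Perm.inv_def, hinv]
  calc _ < 4 * (ε * μp.real (cylOn (ball ℓ N) η) / 4) / μp.real (cylOn (ball ℓ N) η) :=
        hμp.relMeas_coordPerm_preimage_inter_sub_lt η hC hfix hpush (hΩ A hA).1 (hΩ B hB).1
          (hΩ A hA).2 (hT A hA) (hT B hB) (hD A hA) (hD B hB) (happrox A hA) (happrox B hB)
    _ = ε := by field_simp

theorem HC_weaklyMixing
    {ℓ m : ℕ} (hℓ : 1 ≤ ℓ) (a : Fin ℓ) (P : Fin m → ℝ)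
    (hP : ∀ i, 0 < P i) (hPsum : ∑ i, P i = 1)
    (μp : Measure (Conf ℓ m)) (hμp : IsBernoulli P μp)
    (N : ℕ) (η : FG ℓ → Fin m) :
    ∀ ε > (0 : ℝ), ∀ Ω : Finset (Set (Conf ℓ m)),
      (∀ A ∈ Ω, MeasurableSet A ∧ A ⊆ cylOn (ball ℓ N) η) →
      ∃ hplus ∈ HCplus μp a N, ∃ hminus ∈ HCminus μp a N, ∀ A ∈ Ω, ∀ B ∈ Ω,
        |relMeas μp (cylOn (ball ℓ N) η) ((⇑(hplus * hminus)) '' A ∩ B) -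
          relMeas μp (cylOn (ball ℓ N) η) A * relMeas μp (cylOn (ball ℓ N) η) B| < ε :=
  HC_weaklyMixing_general a P hP μp hμp N η

end Finitary
end

section
/- Let p = (P_1, …, P_m) and q = (Q_1, …, Q_n) be probability vectors with strictly positive entries. If P_1^t + ⋯ + P_m^t = Q_1^t + ⋯ + Q_n^t for every t ∈ ℝ, then m = n and there exists a permutation π of {1, …, n} such that P_{π(i)} = Q_i whenever 1 ≤ i ≤ n. -/
open MeasureTheory ProbabilityTheory Filter

open Topology

/-!
Only natural exponents are needed. Removing the common part of the two multisets of values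
leaves multisets `s - t` and `t - s` with no value in common but with the same power sums.
If they were not empty, let `M` be their largest value: divided by `M ^ r`, the `r`-th power
sums tend to the multiplicities of `M`, which would then be equal and positive on both sides.
-/

namespace Multiset

theorem natCast_count_eq_sum_map_ite {α R : Type*} [DecidableEq α] [AddCommMonoidWithOne R]
    (s : Multiset α) (a : α) :
    (s.count a : R) = (s.map fun x => if x = a then 1 else 0).sum := by
  induction s using Multiset.induction with
  | empty => simp
  | cons b s ih => simp [count_cons, ih, eq_comm, add_comm]

theorem tendsto_sum_map_div_pow_count {s : Multiset ℝ} {M : ℝ} (hM : 0 < M)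
    (hs : ∀ x ∈ s, 0 ≤ x ∧ x ≤ M) :
    Tendsto (fun r : ℕ => (s.map fun x => (x / M) ^ r).sum) atTop (𝓝 (s.count M)) := by
  have hlim : ∀ x ∈ s, Tendsto (fun r : ℕ => (x / M) ^ r) atTop (𝓝 (if x = M then 1 else 0)) := by
    intro x hx
    split_ifs with hxM
    · simp [hxM, hM.ne']
    · exact tendsto_pow_atTop_nhds_zero_of_lt_one (div_nonneg (hs x hx).1 hM.le)
        ((div_lt_one hM).2 (lt_of_le_of_ne (hs x hx).2 hxM))
  rw [natCast_count_eq_sum_map_ite]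
  exact tendsto_multiset_sum s hlim

theorem count_eq_of_sum_map_pow_eq {s t : Multiset ℝ} {M : ℝ} (hM : 0 < M)
    (hs : ∀ x ∈ s, 0 ≤ x ∧ x ≤ M) (ht : ∀ x ∈ t, 0 ≤ x ∧ x ≤ M)
    (h : ∀ r : ℕ, (s.map (· ^ r)).sum = (t.map (· ^ r)).sum) :
    s.count M = t.count M := by
  have hscaled : ∀ r : ℕ, (s.map fun x => (x / M) ^ r).sum = (t.map fun x => (x / M) ^ r).sum := by
    intro r
    simp only [div_pow, sum_map_div, h r]
  have hlim := tendsto_sum_map_div_pow_count hM hs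
  simp only [hscaled] at hlim
  exact_mod_cast tendsto_nhds_unique hlim (tendsto_sum_map_div_pow_count hM ht)

theorem sum_map_sub_eq_of_sum_map_eq {α M : Type*} [DecidableEq α] [AddCancelCommMonoid M]
    {s t : Multiset α} {f : α → M} (h : (s.map f).sum = (t.map f).sum) :
    ((s - t).map f).sum = ((t - s).map f).sum := by
  have split (u v : Multiset α) : (u.map f).sum = ((u - v).map f).sum + ((u ∩ v).map f).sum := by
    rw [← sum_add, ← map_add, sub_add_inter]
  rw [split s t, split t s, inter_comm t s] at h
  exact add_right_cancel h

theorem eq_of_sum_map_pow_eq {s t : Multiset ℝ} (hs : ∀ x ∈ s, 0 < x) (ht : ∀ x ∈ t, 0 < x)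
    (h : ∀ r : ℕ, (s.map (· ^ r)).sum = (t.map (· ^ r)).sum) : s = t := by
  by_contra hne
  have hdiff : s - t + (t - s) ≠ 0 := by
    intro h0
    rw [add_eq_zero, tsub_eq_zero_iff_le, tsub_eq_zero_iff_le] at h0
    exact hne (le_antisymm h0.1 h0.2)
  obtain ⟨M, hMmem, hMmax⟩ := exists_max_image id hdiff
  have hpos : ∀ x ∈ s - t + (t - s), 0 < x := by
    intro x hx
    rcases mem_add.1 hx with hx | hx
    · exact hs x (mem_of_le (Multiset.sub_le_self s t) hx)
    · exact ht x (mem_of_le (Multiset.sub_le_self t s) hx)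
  have hbound : ∀ u ≤ s - t + (t - s), ∀ x ∈ u, 0 ≤ x ∧ x ≤ M := fun u hu x hx =>
    ⟨(hpos x (mem_of_le hu hx)).le, hMmax x (mem_of_le hu hx)⟩
  have hcount : (s - t).count M = (t - s).count M :=
    count_eq_of_sum_map_pow_eq (hpos M hMmem) (hbound _ le_self_add)
      (hbound _ le_add_self) fun r => sum_map_sub_eq_of_sum_map_eq (h r)
  rw [count_sub, count_sub] at hcount
  rcases mem_add.1 hMmem with hM | hM <;>
  · have := count_pos.2 hM
    rw [count_sub] at this
    omega

end Multiset

theorem Fintype.exists_equiv_of_map_univ_eq {α β γ : Type*} [Fintype α] [Fintype β]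
    {f : α → γ} {g : β → γ} (h : Finset.univ.val.map f = Finset.univ.val.map g) :
    ∃ e : α ≃ β, ∀ a, g (e a) = f a := by
  classical
  have hfiber : ∀ c, Fintype.card {a // f a = c} = Fintype.card {b // g b = c} := by
    intro c
    simpa [Multiset.count_map, Fintype.card_subtype, Finset.card_def, eq_comm] using
      congrArg (Multiset.count c) h
  exact ⟨Equiv.ofFiberEquiv fun c => Fintype.equivOfCardEq (hfiber c), Equiv.ofFiberEquiv_map _⟩

namespace Finitary

theorem perm_of_power_sums_eq_general
    {m n : ℕ} (P : Fin m → ℝ) (Q : Fin n → ℝ)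
    (hP : ∀ i, 0 < P i) (hQ : ∀ j, 0 < Q j)
    (h : ∀ t : ℝ, ∑ i, P i ^ t = ∑ j, Q j ^ t) :
    m = n ∧ ∃ e : Fin m ≃ Fin n, ∀ j : Fin n, P (e.symm j) = Q j := by
  have hvalues : Finset.univ.val.map P = Finset.univ.val.map Q := by
    refine Multiset.eq_of_sum_map_pow_eq ?_ ?_ fun r => ?_
    · simpa using hP
    · simpa using hQ
    · simpa only [Multiset.map_map, Function.comp_def, ← Finset.sum_eq_multiset_sum,
        Real.rpow_natCast] using h r
  obtain ⟨e, he⟩ := Fintype.exists_equiv_of_map_univ_eq hvalues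
  exact ⟨by simpa using Fintype.card_congr e, e, fun j => by simpa using (he (e.symm j)).symm⟩

theorem perm_of_power_sums_eq
    {m n : ℕ} (P : Fin m → ℝ) (Q : Fin n → ℝ)
    (hP : ∀ i, 0 < P i) (hQ : ∀ j, 0 < Q j)
    (hPsum : ∑ i, P i = 1) (hQsum : ∑ j, Q j = 1)
    (h : ∀ t : ℝ, ∑ i, P i ^ t = ∑ j, Q j ^ t) :
    m = n ∧ ∃ e : Fin m ≃ Fin n, ∀ j : Fin n, P (e.symm j) = Q j :=
  perm_of_power_sums_eq_general P Q hP hQ h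

end Finitary
end
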